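/- arXiv:1804.04608 — 6 statements merged into one kernel-verified Lean document; each statement's English description precedes it below -/
import Mathlib

section
/- The map F on ℓ¹(ℤ≥0) defined by F_k(q) = q_{k+1} − q_k·1_{k≥1} − (Σ_{ℓ≥1} q_ℓ)·(q_k − q_{k−1}·1_{k≥1}) is locally Lipschitz: for all q, q' ∈ ℓ¹(ℤ≥0), ‖F(q) − F(q')‖₁ ≤ 2(1 + ‖q‖₁ + ‖q'‖₁)·‖q − q'‖₁. -/
/-- The drift map of the fluid limit equation:
`F_k(q) = q_{k+1} - q_k 1_{k≥1} - (Σ_{ℓ≥1} q_ℓ)(q_k - q_{k-1} 1_{k≥1})`. -/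
noncomputable def fluidDrift (q : ℕ → ℝ) : ℕ → ℝ
  | 0 => q 1 - (∑' ℓ : ℕ, q (ℓ + 1)) * q 0
  | (k + 1) => q (k + 2) - q (k + 1) - (∑' ℓ : ℕ, q (ℓ + 1)) * (q (k + 1) - q k)

/-- Auxiliary dominating sequence. -/
noncomputable def gAux (d r : ℕ → ℝ) (A D : ℝ) : ℕ → ℝ
  | 0 => d 1 + A * d 0 + D * |r 0|
  | (k + 1) => d (k + 2) + d (k + 1) + A * (d (k + 1) + d k) + D * (|r (k + 1)| + |r k|)

set_option maxHeartbeats 1000000 in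
/-- The fluid drift map is locally Lipschitz on ℓ¹:
`‖F(q) - F(q')‖₁ ≤ 2 (1 + ‖q‖₁ + ‖q'‖₁) ‖q - q'‖₁`. -/
theorem fluidDrift_locally_lipschitz
    (q q' : ℕ → ℝ)
    (hq : Summable (fun k => |q k|)) (hq' : Summable (fun k => |q' k|)) :
    (∑' k, |fluidDrift q k - fluidDrift q' k|)
      ≤ 2 * (1 + (∑' k, |q k|) + (∑' k, |q' k|)) * (∑' k, |q k - q' k|) := by
  set d : ℕ → ℝ := fun k => |q k - q' k| with hd_def
  set A : ℝ := ∑' k, |q k| with hA_def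
  set B : ℝ := ∑' k, |q' k| with hB_def
  have hd : Summable d := by
    apply Summable.of_nonneg_of_le (fun k => abs_nonneg _) (fun k => abs_sub (q k) (q' k))
      (hq.add hq')
  set D : ℝ := ∑' k, d k with hD_def
  have hqs : Summable q := hq.of_abs
  have hq's : Summable q' := hq'.of_abs
  have hqs1 : Summable (fun k => q (k + 1)) := (summable_nat_add_iff 1).mpr hqs
  have hq's1 : Summable (fun k => q' (k + 1)) := (summable_nat_add_iff 1).mpr hq's
  have hqa1 : Summable (fun k => |q (k + 1)|) := (summable_nat_add_iff 1).mpr hq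
  have hr1 : Summable (fun k => |q' (k + 1)|) := (summable_nat_add_iff 1).mpr hq'
  have hd1 : Summable (fun k => d (k + 1)) := (summable_nat_add_iff 1).mpr hd
  have hd2 : Summable (fun k => d (k + 2)) := (summable_nat_add_iff 2).mpr hd
  set S : ℝ := ∑' ℓ : ℕ, q (ℓ + 1) with hS_def
  set S' : ℝ := ∑' ℓ : ℕ, q' (ℓ + 1) with hS'_def
  -- |S| ≤ A
  have hA0 : 0 ≤ A := tsum_nonneg (fun k => abs_nonneg _)
  have hD0 : 0 ≤ D := tsum_nonneg (fun k => abs_nonneg _)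
  have hAsplit : A = |q 0| + ∑' k, |q (k + 1)| := Summable.tsum_eq_zero_add hq
  have hBsplit : B = |q' 0| + ∑' k, |q' (k + 1)| := Summable.tsum_eq_zero_add hq'
  have hDsplit : D = d 0 + ∑' k, d (k + 1) := Summable.tsum_eq_zero_add hd
  have hD1split : (∑' k, d (k + 1)) = d 1 + ∑' k, d (k + 2) := Summable.tsum_eq_zero_add hd1
  have hS : |S| ≤ A := by
    have h1 : |S| ≤ ∑' k, |q (k + 1)| := by
      simpa [Real.norm_eq_abs] using norm_tsum_le_tsum_norm (f := fun k => q (k + 1))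
        (by simpa [Real.norm_eq_abs] using hqa1)
    have h2 : (0:ℝ) ≤ |q 0| := abs_nonneg _
    linarith [hAsplit]
  have hSS : |S - S'| ≤ D := by
    have heq : S - S' = ∑' k, (q (k + 1) - q' (k + 1)) := (Summable.tsum_sub hqs1 hq's1).symm
    have h1 : |∑' k, (q (k + 1) - q' (k + 1))| ≤ ∑' k, d (k + 1) := by
      simpa [Real.norm_eq_abs, hd_def] using
        norm_tsum_le_tsum_norm (f := fun k => q (k + 1) - q' (k + 1))
        (by simpa [Real.norm_eq_abs, hd_def] using hd1)
    have h2 : (0:ℝ) ≤ d 0 := abs_nonneg _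
    rw [heq]
    linarith [hDsplit]
  -- pointwise bound
  have hpt : ∀ k, |fluidDrift q k - fluidDrift q' k| ≤ gAux d q' A D k := by
    intro k
    cases k with
    | zero =>
      have heq : fluidDrift q 0 - fluidDrift q' 0
          = (q 1 - q' 1) - S * (q 0 - q' 0) - (S - S') * q' 0 := by
        simp only [fluidDrift, ← hS_def, ← hS'_def]; ring
      rw [heq]
      have h1 : |(q 1 - q' 1) - S * (q 0 - q' 0) - (S - S') * q' 0|
          ≤ |q 1 - q' 1| + |S * (q 0 - q' 0)| + |(S - S') * q' 0| := by
        calc |(q 1 - q' 1) - S * (q 0 - q' 0) - (S - S') * q' 0|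
            ≤ |(q 1 - q' 1) - S * (q 0 - q' 0)| + |(S - S') * q' 0| := abs_sub _ _
          _ ≤ |q 1 - q' 1| + |S * (q 0 - q' 0)| + |(S - S') * q' 0| := by
              linarith [abs_sub (q 1 - q' 1) (S * (q 0 - q' 0))]
      have h2 : |S * (q 0 - q' 0)| ≤ A * d 0 := by
        rw [abs_mul]; exact mul_le_mul_of_nonneg_right hS (abs_nonneg _)
      have h3 : |(S - S') * q' 0| ≤ D * |q' 0| := by
        rw [abs_mul]; exact mul_le_mul_of_nonneg_right hSS (abs_nonneg _)
      show _ ≤ d 1 + A * d 0 + D * |q' 0|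
      simp only [hd_def]
      linarith
    | succ k =>
      have heq : fluidDrift q (k + 1) - fluidDrift q' (k + 1)
          = (q (k + 2) - q' (k + 2)) - (q (k + 1) - q' (k + 1))
            - S * ((q (k + 1) - q' (k + 1)) - (q k - q' k))
            - (S - S') * (q' (k + 1) - q' k) := by
        simp only [fluidDrift, ← hS_def, ← hS'_def]; ring
      rw [heq]
      have h1 : |(q (k + 2) - q' (k + 2)) - (q (k + 1) - q' (k + 1))
            - S * ((q (k + 1) - q' (k + 1)) - (q k - q' k))
            - (S - S') * (q' (k + 1) - q' k)|
          ≤ |q (k + 2) - q' (k + 2)| + |q (k + 1) - q' (k + 1)|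
            + |S * ((q (k + 1) - q' (k + 1)) - (q k - q' k))|
            + |(S - S') * (q' (k + 1) - q' k)| := by
        calc |(q (k + 2) - q' (k + 2)) - (q (k + 1) - q' (k + 1))
            - S * ((q (k + 1) - q' (k + 1)) - (q k - q' k))
            - (S - S') * (q' (k + 1) - q' k)|
            ≤ |(q (k + 2) - q' (k + 2)) - (q (k + 1) - q' (k + 1))
              - S * ((q (k + 1) - q' (k + 1)) - (q k - q' k))|
              + |(S - S') * (q' (k + 1) - q' k)| := abs_sub _ _
          _ ≤ _ := by
              linarith [abs_sub ((q (k + 2) - q' (k + 2)) - (q (k + 1) - q' (k + 1)))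
                  (S * ((q (k + 1) - q' (k + 1)) - (q k - q' k))),
                abs_sub (q (k + 2) - q' (k + 2)) (q (k + 1) - q' (k + 1))]
      have h2 : |S * ((q (k + 1) - q' (k + 1)) - (q k - q' k))|
          ≤ A * (d (k + 1) + d k) := by
        rw [abs_mul]
        apply mul_le_mul hS _ (abs_nonneg _) hA0
        simpa [hd_def] using abs_sub (q (k + 1) - q' (k + 1)) (q k - q' k)
      have h3 : |(S - S') * (q' (k + 1) - q' k)| ≤ D * (|q' (k + 1)| + |q' k|) := by
        rw [abs_mul]
        exact mul_le_mul hSS (abs_sub _ _) (abs_nonneg _) hD0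
      show _ ≤ d (k + 2) + d (k + 1) + A * (d (k + 1) + d k) + D * (|q' (k + 1)| + |q' k|)
      simp only [hd_def]
      linarith
  -- summability of gAux
  have hgshift : (fun k => gAux d q' A D (k + 1))
      = fun k => d (k + 2) + d (k + 1) + A * (d (k + 1) + d k) + D * (|q' (k + 1)| + |q' k|) := by
    funext k; rfl
  have hgsummable1 : Summable (fun k => gAux d q' A D (k + 1)) := by
    rw [hgshift]
    exact ((hd2.add hd1).add ((hd1.add hd).mul_left A)).add ((hr1.add hq').mul_left D)
  have hg : Summable (gAux d q' A D) := (summable_nat_add_iff 1).mp hgsummable1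
  -- compute sum of gAux
  have hsum : ∑' k, gAux d q' A D k
      = (d 1 + A * d 0 + D * |q' 0|)
        + ((∑' k, d (k + 2)) + (∑' k, d (k + 1))
          + A * ((∑' k, d (k + 1)) + D)
          + D * ((∑' k, |q' (k + 1)|) + B)) := by
    rw [Summable.tsum_eq_zero_add hg]
    congr 1
    rw [hgshift]
    rw [Summable.tsum_add ((hd2.add hd1).add ((hd1.add hd).mul_left A)) ((hr1.add hq').mul_left D),
      Summable.tsum_add (hd2.add hd1) ((hd1.add hd).mul_left A),
      Summable.tsum_add hd2 hd1, tsum_mul_left, tsum_mul_left,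
      Summable.tsum_add hd1 hd, Summable.tsum_add hr1 hq']
  -- final bound
  have hF : Summable (fun k => |fluidDrift q k - fluidDrift q' k|) :=
    Summable.of_nonneg_of_le (fun k => abs_nonneg _) hpt hg
  calc (∑' k, |fluidDrift q k - fluidDrift q' k|)
      ≤ ∑' k, gAux d q' A D k := Summable.tsum_le_tsum hpt hF hg
    _ ≤ 2 * (1 + A + B) * D := by
        have e1 : A * ((∑' k, d (k + 1)) + D) = A * (D - d 0) + A * D := by
          rw [show (∑' k, d (k + 1)) = D - d 0 by linarith [hDsplit]]; ring
        have e2 : D * ((∑' k, |q' (k + 1)|) + B) = D * (B - |q' 0|) + D * B := by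
          rw [show (∑' k, |q' (k + 1)|) = B - |q' 0| by linarith [hBsplit]]; ring
        have e3 : A * (D - d 0) = A * D - A * d 0 := by ring
        have e4 : D * (B - |q' 0|) = D * B - D * |q' 0| := by ring
        have hd0 : (0:ℝ) ≤ d 0 := abs_nonneg _
        have hd1' : (0:ℝ) ≤ d 1 := abs_nonneg _
        rw [hsum]
        nlinarith [hDsplit, hD1split, hA0, hD0, hd0, hd1']
end

section
/- Uniqueness of the dissolution ODE: if ρ > 0 and u_1 ≥ u_2 ≥ … ≥ 0 satisfy Σ_i u_i ≤ ρ, and (v_i)_{i≥1} and (w_i)_{i≥1} are two families of measurable functions v_i, w_i : ℝ≥0 → [0, u_i] each satisfying v_i(t) = (u_i − ∫₀ᵗ ds/(1 + ρ − Σ_j v_j(s)))₊ for all t ≥ 0 (and similarly for w), then v_i(t) = w_i(t) for all i ≥ 1 and t ≥ 0. -/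
/-!
Write `F_v(t) = ∫₀ᵗ (1 + ρ - Σ_j v_j)⁻¹`, so that `v_i = (u_i - F_v)₊`. Where `F_v > F_w` every
`v_j ≤ w_j`, hence the integrand of `F_v` is at most that of `F_w`: the difference `F_v - F_w`
cannot grow while it is positive. Since it starts at `0`, it stays `≤ 0`; by symmetry
`F_v = F_w`, and then `v = w`.
-/

open MeasureTheory Set

theorem integral_nonpos_of_nonpos_of_primitive_pos {h : ℝ → ℝ} {a b : ℝ} (hab : a ≤ b)
    (hint : IntegrableOn h (Icc a b))
    (hneg : ∀ s ∈ Ioc a b, 0 < ∫ x in a..s, h x → h s ≤ 0) :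
    ∫ x in a..b, h x ≤ 0 := by
  by_contra! hpos
  set H : ℝ → ℝ := fun s => ∫ x in a..s, h x
  have hcont : ContinuousOn H (Icc a b) := by
    rw [← uIcc_of_le hab]
    exact intervalIntegral.continuousOn_primitive_interval (by rwa [uIcc_of_le hab])
  have hS : IsCompact (Icc a b ∩ H ⁻¹' Iic 0) :=
    isCompact_Icc.of_isClosed_subset
      (hcont.preimage_isClosed_of_isClosed isClosed_Icc isClosed_Iic) inter_subset_left
  -- `t₀` is the last time at which the primitive is `≤ 0`; after it, `h ≤ 0`.
  obtain ⟨t₀, ⟨⟨hat₀, ht₀b⟩, hHt₀⟩, hmax⟩ :=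
    hS.exists_isGreatest ⟨a, ⟨left_mem_Icc.2 hab, by simp [H]⟩⟩
  have hlast : ∫ x in t₀..b, h x ≤ 0 := by
    rw [intervalIntegral.integral_of_le ht₀b]
    refine setIntegral_nonpos measurableSet_Ioc fun s hs => hneg s ⟨hat₀.trans_lt hs.1, hs.2⟩ ?_
    by_contra! hHs
    exact (hmax ⟨⟨hat₀.trans hs.1.le, hs.2⟩, hHs⟩).not_gt hs.1
  have hsplit := intervalIntegral.integral_add_adjacent_intervals
    ((intervalIntegrable_iff_integrableOn_Icc_of_le hat₀).2
      (hint.mono_set (Icc_subset_Icc le_rfl ht₀b)))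
    ((intervalIntegrable_iff_integrableOn_Icc_of_le ht₀b).2
      (hint.mono_set (Icc_subset_Icc hat₀ le_rfl)))
  have : ∫ x in a..t₀, h x ≤ 0 := hHt₀
  linarith

noncomputable def dissolutionRate (ρ : ℝ) (x : ℕ → ℝ) : ℝ := (1 + ρ - ∑' j, x j)⁻¹

section Dissolution

variable {ρ : ℝ} {u x y : ℕ → ℝ}

theorem one_le_one_add_sub_tsum (hu : Summable u) (hρ : ∑' i, u i ≤ ρ)
    (hx : ∀ j, x j ∈ Icc 0 (u j)) : 1 ≤ 1 + ρ - ∑' j, x j := by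
  have : ∑' j, x j ≤ ∑' j, u j :=
    (hu.of_nonneg_of_le (fun j => (hx j).1) fun j => (hx j).2).tsum_le_tsum (fun j => (hx j).2) hu
  linarith

theorem norm_dissolutionRate_le_one (hu : Summable u) (hρ : ∑' i, u i ≤ ρ)
    (hx : ∀ j, x j ∈ Icc 0 (u j)) : ‖dissolutionRate ρ x‖ ≤ 1 := by
  have h := one_le_one_add_sub_tsum hu hρ hx
  rw [dissolutionRate, norm_inv, Real.norm_of_nonneg (by linarith)]
  exact inv_le_one_of_one_le₀ h

theorem dissolutionRate_mono (hu : Summable u) (hρ : ∑' i, u i ≤ ρ)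
    (hx : ∀ j, x j ∈ Icc 0 (u j)) (hy : ∀ j, y j ∈ Icc 0 (u j)) (hxy : x ≤ y) :
    dissolutionRate ρ x ≤ dissolutionRate ρ y := by
  have hsum : ∑' j, x j ≤ ∑' j, y j :=
    (hu.of_nonneg_of_le (fun j => (hx j).1) fun j => (hx j).2).tsum_le_tsum hxy
      (hu.of_nonneg_of_le (fun j => (hy j).1) fun j => (hy j).2)
  have := one_le_one_add_sub_tsum hu hρ hy
  exact inv_anti₀ (by linarith) (by linarith)

variable {v w : ℕ → ℝ → ℝ}

theorem integrableOn_dissolutionRate (hu : Summable u) (hρ : ∑' i, u i ≤ ρ)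
    (hv_meas : ∀ i, Measurable (v i)) (hv_mem : ∀ i t, 0 ≤ t → v i t ∈ Icc 0 (u i)) (t : ℝ) :
    IntegrableOn (fun s => dissolutionRate ρ fun j => v j s) (Icc 0 t) := by
  refine Measure.integrableOn_of_bounded (M := 1) measure_Icc_lt_top.ne ?_ ?_
  · exact (measurable_const.sub (Measurable.tsum hv_meas)).inv.aestronglyMeasurable
  · filter_upwards [ae_restrict_mem measurableSet_Icc] with s hs
    exact norm_dissolutionRate_le_one hu hρ (hv_mem · s hs.1)

theorem integral_dissolutionRate_le (hu : Summable u) (hρ : ∑' i, u i ≤ ρ)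
    (hv_meas : ∀ i, Measurable (v i)) (hw_meas : ∀ i, Measurable (w i))
    (hv_mem : ∀ i t, 0 ≤ t → v i t ∈ Icc 0 (u i)) (hw_mem : ∀ i t, 0 ≤ t → w i t ∈ Icc 0 (u i))
    (hv_eq : ∀ i t, 0 ≤ t →
      v i t = max (u i - ∫ s in (0 : ℝ)..t, dissolutionRate ρ fun j => v j s) 0)
    (hw_eq : ∀ i t, 0 ≤ t →
      w i t = max (u i - ∫ s in (0 : ℝ)..t, dissolutionRate ρ fun j => w j s) 0)
    {t : ℝ} (ht : 0 ≤ t) :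
    ∫ s in (0 : ℝ)..t, dissolutionRate ρ (fun j => v j s) ≤
      ∫ s in (0 : ℝ)..t, dissolutionRate ρ fun j => w j s := by
  have hint : ∀ {v : ℕ → ℝ → ℝ}, (∀ i, Measurable (v i)) →
      (∀ i t, 0 ≤ t → v i t ∈ Icc 0 (u i)) → ∀ {t : ℝ}, 0 ≤ t →
      IntervalIntegrable (fun s => dissolutionRate ρ fun j => v j s) volume 0 t :=
    fun hv_meas hv_mem _ ht =>
      (intervalIntegrable_iff_integrableOn_Icc_of_le ht).2
        (integrableOn_dissolutionRate hu hρ hv_meas hv_mem _)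
  rw [← sub_nonpos, ← intervalIntegral.integral_sub (hint hv_meas hv_mem ht)
    (hint hw_meas hw_mem ht)]
  refine integral_nonpos_of_nonpos_of_primitive_pos ht
    ((integrableOn_dissolutionRate hu hρ hv_meas hv_mem t).sub
      (integrableOn_dissolutionRate hu hρ hw_meas hw_mem t)) fun s hs hpos => ?_
  have hs0 : 0 ≤ s := hs.1.le
  rw [intervalIntegral.integral_sub (hint hv_meas hv_mem hs0) (hint hw_meas hw_mem hs0),
    sub_pos] at hpos
  refine sub_nonpos.2 (dissolutionRate_mono hu hρ (hv_mem · s hs0) (hw_mem · s hs0) fun j => ?_)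
  rw [hv_eq j s hs0, hw_eq j s hs0]
  gcongr

end Dissolution

theorem dissolution_ode_unique_general
    (ρ : ℝ)
    (u : ℕ → ℝ)
    (hu_sum : Summable u) (hu_le : (∑' i, u i) ≤ ρ)
    (v w : ℕ → ℝ → ℝ)
    (hv_meas : ∀ i, Measurable (v i)) (hw_meas : ∀ i, Measurable (w i))
    (hv_mem : ∀ i t, 0 ≤ t → v i t ∈ Set.Icc 0 (u i))
    (hw_mem : ∀ i t, 0 ≤ t → w i t ∈ Set.Icc 0 (u i))
    (hv_eq : ∀ i t, 0 ≤ t →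
      v i t = max (u i - ∫ s in (0 : ℝ)..t, (1 + ρ - ∑' j, v j s)⁻¹) 0)
    (hw_eq : ∀ i t, 0 ≤ t →
      w i t = max (u i - ∫ s in (0 : ℝ)..t, (1 + ρ - ∑' j, w j s)⁻¹) 0) :
    ∀ i t, 0 ≤ t → v i t = w i t := by
  intro i t ht
  have hF := le_antisymm
    (integral_dissolutionRate_le hu_sum hu_le hv_meas hw_meas hv_mem hw_mem hv_eq hw_eq ht)
    (integral_dissolutionRate_le hu_sum hu_le hw_meas hv_meas hw_mem hv_mem hw_eq hv_eq ht)
  rw [hv_eq i t ht, hw_eq i t ht]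
  exact congrArg (fun F => max (u i - F) 0) hF

/-- Uniqueness for the dissolution integral equation
`v i t = (u i - ∫₀ᵗ (1 + ρ - Σ_j v j s)⁻¹ ds)₊`. -/
theorem dissolution_ode_unique
    (ρ : ℝ) (hρ : 0 < ρ)
    (u : ℕ → ℝ) (hu_anti : Antitone u) (hu_nonneg : ∀ i, 0 ≤ u i)
    (hu_sum : Summable u) (hu_le : (∑' i, u i) ≤ ρ)
    (v w : ℕ → ℝ → ℝ)
    (hv_meas : ∀ i, Measurable (v i)) (hw_meas : ∀ i, Measurable (w i))
    (hv_mem : ∀ i t, 0 ≤ t → v i t ∈ Set.Icc 0 (u i))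
    (hw_mem : ∀ i t, 0 ≤ t → w i t ∈ Set.Icc 0 (u i))
    (hv_eq : ∀ i t, 0 ≤ t →
      v i t = max (u i - ∫ s in (0 : ℝ)..t, (1 + ρ - ∑' j, v j s)⁻¹) 0)
    (hw_eq : ∀ i t, 0 ≤ t →
      w i t = max (u i - ∫ s in (0 : ℝ)..t, (1 + ρ - ∑' j, w j s)⁻¹) 0) :
    ∀ i t, 0 ≤ t → v i t = w i t :=
  dissolution_ode_unique_general ρ u hu_sum hu_le v w hv_meas hw_meas hv_mem hw_mem hv_eq hw_eq
end

section
/- Under the constraint Σ_{i=1}^∞ u_i ≤ ρ with (u_i) non-increasing and non-negative, the quantity (1+ρ)u_1 − (1/2)Σ_{i=1}^∞ u_i² is uniquely maximized by u_1 = ρ, u_i = 0 for i ≥ 2, with maximal value ρ + ρ²/2. -/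
/-- Under the constraint `Σ u_i ≤ ρ` (with `u` non-increasing, non-negative),
`(1+ρ)u₁ - ½ Σ u_i²` is at most `ρ + ρ²/2`, with equality iff `u₁ = ρ` and
`u_i = 0` for `i ≥ 2`.  (Here `u 0` is the paper's `u_1`.) -/
theorem worst_case_profile
    (ρ : ℝ) (hρ : 0 < ρ)
    (u : ℕ → ℝ) (hu_anti : Antitone u) (hu_nonneg : ∀ i, 0 ≤ u i)
    (hu_sum : Summable u) (hu_le : (∑' i, u i) ≤ ρ)
    (hu_sq : Summable (fun i => u i ^ 2)) :
    (1 + ρ) * u 0 - (1 / 2) * (∑' i, u i ^ 2) ≤ ρ + ρ ^ 2 / 2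
    ∧ ((1 + ρ) * u 0 - (1 / 2) * (∑' i, u i ^ 2) = ρ + ρ ^ 2 / 2
        ↔ u 0 = ρ ∧ ∀ i : ℕ, 1 ≤ i → u i = 0) := by
  have h0 : u 0 ≤ ∑' i, u i := Summable.le_tsum hu_sum 0 (fun j _ => hu_nonneg j)
  have h0ρ : u 0 ≤ ρ := h0.trans hu_le
  have hQ : u 0 ^ 2 ≤ ∑' i, u i ^ 2 :=
    Summable.le_tsum hu_sq 0 (fun j _ => sq_nonneg (u j))
  have hle : (1 + ρ) * u 0 - (1 / 2) * (∑' i, u i ^ 2) ≤ ρ + ρ ^ 2 / 2 := by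
    nlinarith [hu_nonneg 0]
  refine ⟨hle, ?_, ?_⟩
  · intro heq
    have hu0 : u 0 = ρ := by nlinarith [hu_nonneg 0]
    have hQeq : (∑' i, u i ^ 2) = u 0 ^ 2 := by nlinarith
    refine ⟨hu0, fun i hi => ?_⟩
    have hsub : u 0 ^ 2 + u i ^ 2 ≤ ∑' j, u j ^ 2 := by
      have : ∑ j ∈ ({0, i} : Finset ℕ), u j ^ 2 ≤ ∑' j, u j ^ 2 :=
        Summable.sum_le_tsum _ (fun j _ => sq_nonneg (u j)) hu_sq
      rwa [Finset.sum_pair (by omega : (0:ℕ) ≠ i)] at this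
    have : u i ^ 2 ≤ 0 := by linarith [hQeq ▸ hsub]
    have := sq_nonneg (u i)
    nlinarith
  · rintro ⟨hu0, hrest⟩
    have hQeq : (∑' i, u i ^ 2) = ρ ^ 2 := by
      rw [tsum_eq_single 0 (fun i hi => by
        rw [hrest i (Nat.one_le_iff_ne_zero.mpr hi)]; ring)]
      rw [hu0]
    rw [hQeq, hu0]; ring
end

section
/- For a reversible irreducible continuous-time Markov chain on a finite state space Ω with stationary law π, transition kernel P_t, and spectral gap g > 0: for any initial law ν and ε ∈ (0,1), setting t = (1/g)(D_KL(ν‖π)/ε + log(1/ε) + 1), one has ‖νP_t − π‖_TV ≤ ε. -/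
open Finset

/-- Fast mixing once relative entropy is small: for a finite-state chain with
stochastic kernels `P t` satisfying the spectral-gap ℓ² contraction bound, starting
from `ν` and taking `t = (1/g)(D_KL(ν‖π)/ε + log(1/ε) + 1)`, the total-variation
distance (half the ℓ¹ distance) of `ν P_t` to `π` is at most `ε`. -/
theorem fast_mixing_small_entropy
    {Ω : Type*} [Fintype Ω] [Nonempty Ω]
    (π ν : Ω → ℝ)
    (hπ_pos : ∀ x, 0 < π x) (hπ_sum : ∑ x, π x = 1)
    (hν_nonneg : ∀ x, 0 ≤ ν x) (hν_sum : ∑ x, ν x = 1)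
    (P : ℝ → Ω → Ω → ℝ)
    (hP_nonneg : ∀ t, 0 ≤ t → ∀ x y, 0 ≤ P t x y)
    (hP_stoch : ∀ t, 0 ≤ t → ∀ x, ∑ y, P t x y = 1)
    (g : ℝ) (hg : 0 < g)
    -- the classical ℓ² contraction bound, valid for every initial law μ and t ≥ 0
    (hcontr : ∀ μ : Ω → ℝ, (∀ x, 0 ≤ μ x) → (∑ x, μ x = 1) → ∀ t : ℝ, 0 ≤ t →
      (1 / 2) * ∑ y, |(∑ x, μ x * P t x y) - π y|
        ≤ (1 / 2) * Real.sqrt (⨆ x, μ x / π x) * Real.exp (-g * t))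
    (ε : ℝ) (hε : ε ∈ Set.Ioo (0 : ℝ) 1)
    (t : ℝ)
    (ht : t = (1 / g) * ((∑ x, ν x * Real.log (ν x / π x)) / ε
        + Real.log (1 / ε) + 1)) :
    (1 / 2) * ∑ y, |(∑ x, ν x * P t x y) - π y| ≤ ε := by
  classical
  obtain ⟨hε0, hε1⟩ := hε
  set K := ∑ x, ν x * Real.log (ν x / π x) with hK
  clear_value K
  -- pointwise Gibbs inequality
  have hpt : ∀ x, ν x - π x ≤ ν x * Real.log (ν x / π x) := by
    intro x
    rcases (hν_nonneg x).eq_or_lt with h0 | h0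
    · rw [← h0]; simpa using (hπ_pos x).le
    · have hπx := hπ_pos x
      have h1 : Real.log (π x / ν x) ≤ π x / ν x - 1 :=
        Real.log_le_sub_one_of_pos (div_pos hπx h0)
      have h2 : Real.log (ν x / π x) = - Real.log (π x / ν x) := by
        rw [← Real.log_inv]
        congr 1
        field_simp
      have h3 : 1 - π x / ν x ≤ Real.log (ν x / π x) := by rw [h2]; linarith
      have h5 := mul_le_mul_of_nonneg_left h3 h0.le
      have h4 : ν x * (1 - π x / ν x) = ν x - π x := by field_simp
      linarith [h4 ▸ h5]
  have hK0 : 0 ≤ K := by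
    have : ∑ x, (ν x - π x) ≤ ∑ x, ν x * Real.log (ν x / π x) :=
      Finset.sum_le_sum fun x _ => hpt x
    rw [← hK] at this
    rw [Finset.sum_sub_distrib, hν_sum, hπ_sum] at this
    linarith
  set a : ℝ := 2 * K / ε + 1 with ha
  clear_value a
  have ha1 : 1 ≤ a := by
    have h0 : 0 ≤ 2 * K / ε := by positivity
    linarith [ha.le, ha.ge]
  -- the "bad" set where ν/π exceeds e^a
  set B : Finset Ω := Finset.univ.filter (fun x => Real.exp a * π x < ν x) with hB
  -- Markov-type bound: K ≥ (a-1) ν(B) + π(B)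
  have hmarkov : (a - 1) * ∑ x ∈ B, ν x + ∑ x ∈ B, π x ≤ K := by
    have hsplit : K = (∑ x ∈ B, ν x * Real.log (ν x / π x))
        + ∑ x ∈ Bᶜ, ν x * Real.log (ν x / π x) := by
      rw [hK]
      exact (Finset.sum_add_sum_compl B _).symm
    have hBbound : ∀ x ∈ B, a * ν x ≤ ν x * Real.log (ν x / π x) := by
      intro x hx
      rw [hB, Finset.mem_filter] at hx
      have hxlt := hx.2
      have hπx := hπ_pos x
      have hνx : 0 < ν x := lt_trans (by positivity) hxlt
      have hlog : a < Real.log (ν x / π x) := by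
        rw [Real.lt_log_iff_exp_lt (by positivity)]
        rw [lt_div_iff₀ hπx]
        exact hxlt
      nlinarith
    have hBc : ∀ x ∈ Bᶜ, ν x - π x ≤ ν x * Real.log (ν x / π x) := fun x _ => hpt x
    have h1 : a * ∑ x ∈ B, ν x ≤ ∑ x ∈ B, ν x * Real.log (ν x / π x) := by
      rw [Finset.mul_sum]
      exact Finset.sum_le_sum hBbound
    have h2 : (∑ x ∈ Bᶜ, ν x) - ∑ x ∈ Bᶜ, π x ≤ ∑ x ∈ Bᶜ, ν x * Real.log (ν x / π x) := by
      rw [← Finset.sum_sub_distrib]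
      exact Finset.sum_le_sum hBc
    have hν' : ∑ x ∈ B, ν x + ∑ x ∈ Bᶜ, ν x = 1 := by
      rw [Finset.sum_add_sum_compl, hν_sum]
    have hπ' : ∑ x ∈ B, π x + ∑ x ∈ Bᶜ, π x = 1 := by
      rw [Finset.sum_add_sum_compl, hπ_sum]
    linarith [hsplit]
  -- ν(B) ≤ ε/2
  have hνB : ∑ x ∈ B, ν x ≤ ε / 2 := by
    by_contra hcon
    push_neg at hcon
    have hBne : ∃ x, x ∈ B := by
      by_contra hempty
      push_neg at hempty
      have : ∑ x ∈ B, ν x = 0 := Finset.sum_eq_zero fun x hx => absurd hx (hempty x)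
      linarith
    obtain ⟨x0, hx0⟩ := hBne
    have hπB : 0 < ∑ x ∈ B, π x :=
      Finset.sum_pos' (fun x _ => (hπ_pos x).le) ⟨x0, hx0, hπ_pos x0⟩
    have hνB0 : 0 ≤ ∑ x ∈ B, ν x := Finset.sum_nonneg fun x _ => hν_nonneg x
    have ha' : a - 1 = 2 * K / ε := by rw [ha]; ring
    rw [ha'] at hmarkov
    have hKd : 0 ≤ 2 * K / ε := by positivity
    have hmul : 2 * K / ε * (ε / 2) ≤ 2 * K / ε * ∑ x ∈ B, ν x :=
      mul_le_mul_of_nonneg_left hcon.le hKd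
    have heq : 2 * K / ε * (ε / 2) = K := by field_simp
    linarith
  -- truncated measure
  set h : Ω → ℝ := fun x => min (ν x) (Real.exp a * π x) with hh
  set m : ℝ := ∑ x, h x with hm
  set μ : Ω → ℝ := fun x => h x + (1 - m) * π x with hμ
  have hh_nonneg : ∀ x, 0 ≤ h x := fun x => le_min (hν_nonneg x) (mul_pos (Real.exp_pos a) (hπ_pos x)).le
  have hm1 : m ≤ 1 := by
    rw [hm, ← hν_sum]
    exact Finset.sum_le_sum fun x _ => min_le_left _ _
  have hμ_nonneg : ∀ x, 0 ≤ μ x := by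
    intro x
    have := hh_nonneg x
    have := (hπ_pos x).le
    have h1m : 0 ≤ 1 - m := by linarith
    positivity
  have hμ_sum : ∑ x, μ x = 1 := by
    rw [hμ]
    simp only
    rw [Finset.sum_add_distrib, ← Finset.mul_sum, hπ_sum, ← hm]
    ring
  -- t ≥ 0
  have hlogε : 0 < Real.log (1 / ε) := Real.log_pos (by rw [lt_div_iff₀ hε0]; linarith)
  have ht0 : 0 ≤ t := by
    rw [ht]
    have h1 : 0 ≤ K / ε := by positivity
    have h2 : 0 ≤ K / ε + Real.log (1 / ε) + 1 := by linarith
    exact mul_nonneg (by positivity) h2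
  -- the exponential factor
  have hexp : Real.exp (-g * t) = ε * Real.exp (-(K / ε + 1)) := by
    have : -g * t = -(Real.log (1 / ε)) + -(K / ε + 1) := by
      rw [ht]
      field_simp
      ring
    rw [this, Real.exp_add, Real.exp_neg, Real.exp_log (by positivity)]
    field_simp
  -- bound the sup
  have hsup : Real.sqrt (⨆ x, μ x / π x) ≤ Real.exp ((a + 1) / 2) := by
    have hb : (⨆ x, μ x / π x) ≤ Real.exp (a + 1) := by
      apply ciSup_le
      intro x
      have hπx := hπ_pos x
      have h1 : h x ≤ Real.exp a * π x := min_le_right _ _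
      have h2 : (1 - m) * π x ≤ 1 * π x := by
        have hm0 : 0 ≤ m := Finset.sum_nonneg fun x _ => hh_nonneg x
        apply mul_le_mul_of_nonneg_right _ hπx.le
        linarith
      have h3 : μ x ≤ (Real.exp a + 1) * π x := by
        rw [hμ]; simp only; nlinarith
      have h4 : μ x / π x ≤ Real.exp a + 1 := by
        rw [div_le_iff₀ hπx]; exact h3
      have h5 : Real.exp a + 1 ≤ Real.exp (a + 1) := by
        have e1 : (1:ℝ) ≤ Real.exp a := by
          rw [Real.one_le_exp_iff]; linarith
        have e2 : Real.exp (a + 1) = Real.exp a * Real.exp 1 := Real.exp_add a 1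
        have e3 : (2:ℝ) ≤ Real.exp 1 := by
          have := Real.add_one_le_exp (1:ℝ)
          linarith
        nlinarith [Real.exp_pos a]
      linarith
    calc Real.sqrt (⨆ x, μ x / π x) ≤ Real.sqrt (Real.exp (a + 1)) :=
          Real.sqrt_le_sqrt hb
      _ = Real.exp ((a + 1) / 2) := (Real.exp_half _).symm
  -- the contraction applied to μ
  have hcμ := hcontr μ hμ_nonneg hμ_sum t ht0
  -- ℓ¹ distance between ν and μ
  have hl1 : ∑ x, |ν x - μ x| ≤ 2 * ∑ x ∈ B, ν x := by
    have hbd : ∀ x, |ν x - μ x| ≤ (ν x - h x) + (1 - m) * π x := by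
      intro x
      have h1 : 0 ≤ ν x - h x := by
        have := min_le_left (ν x) (Real.exp a * π x); rw [hh]; simp only; linarith
      have h2 : 0 ≤ (1 - m) * π x := by
        have := (hπ_pos x).le; nlinarith [hm1]
      have : ν x - μ x = (ν x - h x) - (1 - m) * π x := by rw [hμ]; ring
      rw [this, abs_sub_le_iff]
      constructor <;> linarith
    have hsum1 : ∑ x, ((ν x - h x) + (1 - m) * π x) = 2 * (1 - m) := by
      rw [Finset.sum_add_distrib, Finset.sum_sub_distrib, hν_sum, ← hm,
        ← Finset.mul_sum, hπ_sum]
      ring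
    have h1m : 1 - m ≤ ∑ x ∈ B, ν x := by
      have : 1 - m = ∑ x, (ν x - h x) := by
        rw [Finset.sum_sub_distrib, hν_sum, ← hm]
      rw [this]
      have hzero : ∀ x ∈ Bᶜ, ν x - h x = 0 := by
        intro x hx
        rw [Finset.mem_compl, hB, Finset.mem_filter] at hx
        push_neg at hx
        have : h x = ν x := min_eq_left (hx (Finset.mem_univ x))
        linarith
      rw [← Finset.sum_add_sum_compl B, Finset.sum_eq_zero hzero, add_zero]
      exact Finset.sum_le_sum fun x hx => by
        have := hh_nonneg x; linarith
    calc ∑ x, |ν x - μ x| ≤ ∑ x, ((ν x - h x) + (1 - m) * π x) :=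
          Finset.sum_le_sum fun x _ => hbd x
      _ = 2 * (1 - m) := hsum1
      _ ≤ 2 * ∑ x ∈ B, ν x := by linarith
  -- compare the two evolved measures
  have hcomp : ∑ y, |(∑ x, ν x * P t x y) - π y|
      ≤ (∑ y, |(∑ x, μ x * P t x y) - π y|) + ∑ x, |ν x - μ x| := by
    have step : ∀ y, |(∑ x, ν x * P t x y) - π y|
        ≤ |(∑ x, μ x * P t x y) - π y| + ∑ x, |ν x - μ x| * P t x y := by
      intro y
      have hdiff : (∑ x, ν x * P t x y) - π y
          = ((∑ x, μ x * P t x y) - π y) + ∑ x, (ν x - μ x) * P t x y := by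
        have hsub : ∑ x, (ν x - μ x) * P t x y
            = (∑ x, ν x * P t x y) - ∑ x, μ x * P t x y := by
          rw [← Finset.sum_sub_distrib]
          exact Finset.sum_congr rfl fun x _ => by ring
        rw [hsub]; ring
      rw [hdiff]
      refine le_trans (abs_add_le _ _) ?_
      gcongr
      refine le_trans (Finset.abs_sum_le_sum_abs _ _) ?_
      apply Finset.sum_le_sum
      intro x _
      rw [abs_mul, abs_of_nonneg (hP_nonneg t ht0 x y)]
    calc ∑ y, |(∑ x, ν x * P t x y) - π y|
        ≤ ∑ y, (|(∑ x, μ x * P t x y) - π y| + ∑ x, |ν x - μ x| * P t x y) :=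
          Finset.sum_le_sum fun y _ => step y
      _ = (∑ y, |(∑ x, μ x * P t x y) - π y|) + ∑ y, ∑ x, |ν x - μ x| * P t x y := by
          rw [Finset.sum_add_distrib]
      _ = (∑ y, |(∑ x, μ x * P t x y) - π y|) + ∑ x, |ν x - μ x| := by
          congr 1
          rw [Finset.sum_comm]
          simp_rw [← Finset.mul_sum]
          refine Finset.sum_congr rfl fun x _ => ?_
          rw [hP_stoch t ht0 x, mul_one]
  -- put everything together
  have hfirst : (1 / 2) * ∑ y, |(∑ x, μ x * P t x y) - π y| ≤ ε / 2 := by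
    refine le_trans hcμ ?_
    rw [hexp]
    have hsq0 : 0 ≤ Real.sqrt (⨆ x, μ x / π x) := Real.sqrt_nonneg _
    have key : Real.sqrt (⨆ x, μ x / π x) * Real.exp (-(K / ε + 1)) ≤ 1 := by
      have : Real.exp ((a + 1) / 2) * Real.exp (-(K / ε + 1)) = 1 := by
        rw [← Real.exp_add]
        have : (a + 1) / 2 + -(K / ε + 1) = 0 := by
          rw [ha]; field_simp; ring
        rw [this, Real.exp_zero]
      calc Real.sqrt (⨆ x, μ x / π x) * Real.exp (-(K / ε + 1))
          ≤ Real.exp ((a + 1) / 2) * Real.exp (-(K / ε + 1)) :=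
            mul_le_mul_of_nonneg_right hsup (Real.exp_pos _).le
        _ = 1 := this
    calc (1 / 2) * Real.sqrt (⨆ x, μ x / π x) * (ε * Real.exp (-(K / ε + 1)))
        = (ε / 2) * (Real.sqrt (⨆ x, μ x / π x) * Real.exp (-(K / ε + 1))) := by ring
      _ ≤ (ε / 2) * 1 := by
          apply mul_le_mul_of_nonneg_left key (by positivity)
      _ = ε / 2 := by ring
  have hsecond : (1 / 2) * ∑ x, |ν x - μ x| ≤ ε / 2 := by
    have := hl1
    linarith
  calc (1 / 2) * ∑ y, |(∑ x, ν x * P t x y) - π y|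
      ≤ (1 / 2) * ((∑ y, |(∑ x, μ x * P t x y) - π y|) + ∑ x, |ν x - μ x|) := by
        apply mul_le_mul_of_nonneg_left hcomp (by norm_num)
    _ = (1 / 2) * (∑ y, |(∑ x, μ x * P t x y) - π y|) + (1 / 2) * ∑ x, |ν x - μ x| := by
        ring
    _ ≤ ε / 2 + ε / 2 := add_le_add hfirst hsecond
    _ = ε := by ring
end

section
/- Let ν, π be probability measures on a finite set Ω with π fully supported, and ε ∈ (0,1). Define S := {x : log(ν(x)/π(x)) ≤ 1 + 2·D_KL(ν‖π)/ε}. Then ν(Sᶜ) ≤ ε/2. -/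
open Finset

/-- The set `S = {x : log(ν(x)/π(x)) ≤ 1 + 2 D_KL(ν‖π)/ε}` carries all but `ε/2`
of the mass of `ν`:  `ν(Sᶜ) ≤ ε/2`. -/
theorem mass_outside_entropy_set
    {Ω : Type*} [Fintype Ω]
    (π ν : Ω → ℝ)
    (hπ_pos : ∀ x, 0 < π x) (hπ_sum : ∑ x, π x = 1)
    (hν_nonneg : ∀ x, 0 ≤ ν x) (hν_sum : ∑ x, ν x = 1)
    (ε : ℝ) (hε : ε ∈ Set.Ioo (0 : ℝ) 1) :
    ∑ x ∈ Finset.univ.filter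
        (fun x => ¬ Real.log (ν x / π x)
          ≤ 1 + 2 * (∑ y, ν y * Real.log (ν y / π y)) / ε), ν x
      ≤ ε / 2 := by
  obtain ⟨hε0, hε1⟩ := hε
  set D := ∑ y, ν y * Real.log (ν y / π y) with hDdef
  set T := Finset.univ.filter
      (fun x => ¬ Real.log (ν x / π x) ≤ 1 + 2 * D / ε) with hTdef
  -- pointwise lower bound: ν x - π x ≤ ν x * log (ν x / π x)
  have key : ∀ x, ν x - π x ≤ ν x * Real.log (ν x / π x) := by
    intro x
    rcases eq_or_lt_of_le (hν_nonneg x) with h | h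
    · rw [← h]
      have := hπ_pos x
      simp
      linarith
    · have hπ := hπ_pos x
      have hlog : Real.log (π x / ν x) ≤ π x / ν x - 1 :=
        Real.log_le_sub_one_of_pos (by positivity)
      have hinv : Real.log (ν x / π x) = - Real.log (π x / ν x) := by
        rw [← Real.log_inv]
        congr 1
        field_simp
      have hmul : ν x * (π x / ν x) = π x := by field_simp
      rw [hinv]
      nlinarith [hlog, h]
  have hf_nonneg : ∀ x, 0 ≤ ν x * Real.log (ν x / π x) - ν x + π x := by
    intro x; linarith [key x]
  have hsum : ∑ x, (ν x * Real.log (ν x / π x) - ν x + π x) = D := by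
    rw [Finset.sum_add_distrib, Finset.sum_sub_distrib, hν_sum, hπ_sum, hDdef]
    ring
  have hD0 : 0 ≤ D := by
    rw [← hsum]
    exact Finset.sum_nonneg fun x _ => hf_nonneg x
  have hTsum : ∑ x ∈ T, (ν x * Real.log (ν x / π x) - ν x + π x) ≤ D := by
    rw [← hsum]
    exact Finset.sum_le_sum_of_subset_of_nonneg (Finset.subset_univ T)
      (fun x _ _ => hf_nonneg x)
  have hTlb : ∀ x ∈ T, (2 * D / ε) * ν x + π x
      ≤ ν x * Real.log (ν x / π x) - ν x + π x := by
    intro x hx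
    rw [hTdef, Finset.mem_filter] at hx
    have hlt : 1 + 2 * D / ε < Real.log (ν x / π x) := lt_of_not_ge hx.2
    nlinarith [hν_nonneg x]
  have hmain : (2 * D / ε) * (∑ x ∈ T, ν x) + ∑ x ∈ T, π x ≤ D := by
    have := Finset.sum_le_sum hTlb
    calc (2 * D / ε) * (∑ x ∈ T, ν x) + ∑ x ∈ T, π x
        = ∑ x ∈ T, ((2 * D / ε) * ν x + π x) := by
          rw [Finset.sum_add_distrib, Finset.mul_sum]
      _ ≤ ∑ x ∈ T, (ν x * Real.log (ν x / π x) - ν x + π x) := this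
      _ ≤ D := hTsum
  rcases eq_or_lt_of_le hD0 with hD | hD
  · -- D = 0 : T must be empty
    have hTempty : T = ∅ := by
      by_contra hne
      obtain ⟨x, hx⟩ := Finset.nonempty_of_ne_empty hne
      have hπT : π x ≤ ∑ y ∈ T, π y :=
        Finset.single_le_sum (fun y _ => (hπ_pos y).le) hx
      have hνT : 0 ≤ ∑ y ∈ T, ν y :=
        Finset.sum_nonneg fun y _ => hν_nonneg y
      have : (2 * D / ε) * (∑ y ∈ T, ν y) = 0 := by
        rw [← hD]; ring
      linarith [hπ_pos x]
    rw [hTempty]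
    simp
    positivity
  · -- D > 0
    have hπT : 0 ≤ ∑ x ∈ T, π x := Finset.sum_nonneg fun x _ => (hπ_pos x).le
    have h1 : (2 * D / ε) * (∑ x ∈ T, ν x) ≤ D := by linarith
    have h2 : 2 * D * (∑ x ∈ T, ν x) ≤ D * ε := by
      have := mul_le_mul_of_nonneg_right h1 hε0.le
      rw [div_mul_eq_mul_div, div_mul_eq_mul_div, mul_div_assoc,
        div_self hε0.ne', mul_one] at this
      linarith
    nlinarith
end

section
/- If a_0ⁿ, a_1ⁿ, … are finitely supported families of non-negative integers with total sum sⁿ := Σ_k a_kⁿ → ∞ and a_kⁿ/sⁿ → p_k for each k, where p is a probability distribution on ℤ≥0, then liminf_{n→∞} h(a_0ⁿ, a_1ⁿ, …)/sⁿ ≥ H(p), where h(a_0,…,a_K) = log of the multinomial coefficient (a_0+⋯+a_K)!/(a_0!⋯a_K!). -/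
/-!
Merging all classes `k ≥ K` into a single class can only decrease a multinomial coefficient. For
the coarser coefficient, Stirling's bounds `n log n - n ≤ log n! ≤ n log n - n + O(log n)` give
`log (multinomial a) ≥ N ∑_{k < K} negMulLog (a_k / N) - (K + 1)(1 + log N)` with `N = ∑ a_k`
(the merged class's own entropy term is nonnegative and discarded). After dividing by `N → ∞`
the right side tends to `∑_{k < K} negMulLog p_k`, and `K` is arbitrary.
-/

open Filter Real Finset
open scoped Nat Topology

lemma log_natCast_le_log_natCast {m n : ℕ} (h : m ≤ n) : log m ≤ log n := by
  rcases m.eq_zero_or_pos with rfl | hm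
  · simpa using log_natCast_nonneg n
  · exact log_le_log (Nat.cast_pos.mpr hm) (Nat.cast_le.mpr h)

lemma self_mul_log_sub_self_le_log_factorial (n : ℕ) : n * log n - n ≤ log n ! := by
  rcases n.eq_zero_or_pos with rfl | hn
  · simp
  have h := pow_div_factorial_le_exp (n : ℝ) n.cast_nonneg n
  have hfac : (0 : ℝ) < n ! := by positivity
  rw [div_le_iff₀ hfac, ← log_le_log_iff (by positivity) (by positivity), log_pow,
    log_mul (by positivity) hfac.ne', log_exp] at h
  linarith

lemma log_factorial_le (n : ℕ) : log n ! ≤ n * log n - n + log n / 2 + 1 := by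
  rcases n with _ | n
  · simp
  have h := log_le_log (Stirling.stirlingSeq'_pos n)
    (Stirling.stirlingSeq'_antitone (Nat.zero_le n))
  simp only [Function.comp_apply] at h
  rw [Stirling.stirlingSeq_one, Stirling.log_stirlingSeq_formula,
    log_div (by positivity) (by positivity), log_exp, log_mul (by norm_num) (by positivity)] at h
  rw [log_div (by positivity) (by positivity), log_exp, log_sqrt (by norm_num)] at h
  linarith

lemma log_factorial_le_of_le {m n : ℕ} (h : m ≤ n) :
    log m ! ≤ m * log m - m + (1 + log n) := by
  linarith [log_factorial_le m, log_natCast_nonneg m, log_natCast_le_log_natCast h]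

lemma mul_negMulLog_div {c N : ℝ} (hc : 0 ≤ c) (hcN : c ≤ N) :
    N * negMulLog (c / N) = c * log N - c * log c := by
  rcases hc.eq_or_lt with rfl | hc
  · simp
  have hN : N ≠ 0 := (hc.trans_le hcN).ne'
  rw [negMulLog, log_div hc.ne' hN]
  field_simp
  ring

lemma Finset.prod_factorial_le_prod_factorial_mul_factorial_sum_sdiff {ι : Type*}
    [DecidableEq ι] (s t : Finset ι) (f : ι → ℕ) :
    ∏ i ∈ s, (f i)! ≤ (∏ i ∈ t, (f i)!) * (∑ i ∈ s \ t, f i)! := by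
  rw [← prod_inter_mul_prod_sdiff s t]
  apply Nat.mul_le_mul
  · exact prod_le_prod_of_subset_of_one_le' inter_subset_right
      fun i _ _ ↦ Nat.factorial_pos (f i)
  · exact Nat.le_of_dvd (Nat.factorial_pos _) (Nat.prod_factorial_dvd_factorial_sum _ _)

namespace Finsupp

variable {ι : Type*}

lemma sum_add_sum_support_sdiff {M : Type*} [AddCommMonoid M] [DecidableEq ι]
    (f : ι →₀ M) (t : Finset ι) :
    ∑ i ∈ t, f i + ∑ i ∈ f.support \ t, f i = f.degree := by
  rw [degree_apply, ← sum_inter_add_sum_sdiff f.support t, inter_comm]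
  congr 1
  exact (Finset.sum_subset inter_subset_left fun i _ hi ↦ by simp_all).symm

lemma log_factorial_degree_le [DecidableEq ι] (f : ι →₀ ℕ) (t : Finset ι) :
    log f.degree ! ≤ log (Nat.multinomial f.support f) + ∑ i ∈ t, log (f i)! +
      log (∑ i ∈ f.support \ t, f i)! := by
  have hle : f.degree ! ≤
      Nat.multinomial f.support f * ((∏ i ∈ t, (f i)!) * (∑ i ∈ f.support \ t, f i)!) := by
    rw [degree_apply, ← Nat.multinomial_spec, mul_comm]
    exact Nat.mul_le_mul_left _
      (prod_factorial_le_prod_factorial_mul_factorial_sum_sdiff _ _ _)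
  have hlog := log_le_log (by positivity) (Nat.cast_le (α := ℝ).mpr hle)
  rwa [Nat.cast_mul, Nat.cast_mul, Nat.cast_prod,
    log_mul (Nat.cast_pos.mpr (Nat.multinomial_pos _ _)).ne' (by positivity),
    log_mul (by positivity) (by positivity),
    log_prod fun i _ ↦ (Nat.cast_pos.mpr (Nat.factorial_pos _)).ne', ← add_assoc] at hlog

theorem degree_mul_sum_negMulLog_le_log_multinomial_add (f : ι →₀ ℕ) (t : Finset ι) :
    f.degree * ∑ i ∈ t, negMulLog (f i / f.degree) ≤
      log (Nat.multinomial f.support f) + (#t + 1) * (1 + log f.degree) := by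
  classical
  have hM := log_factorial_degree_le f t
  set N := f.degree
  set r := ∑ i ∈ f.support \ t, f i
  have hsplit := f.sum_add_sum_support_sdiff t
  have hsplit' : ∑ i ∈ t, (f i : ℝ) + r = N := by exact_mod_cast hsplit
  have hsplit_log : (∑ i ∈ t, (f i : ℝ)) * log N = N * log N - r * log N := by
    rw [← hsplit']
    ring
  have hrN : r ≤ N := by omega
  have hN := self_mul_log_sub_self_le_log_factorial N
  have hfi : ∑ i ∈ t, log (f i)! ≤ ∑ i ∈ t, (f i * log (f i) - f i + (1 + log N)) :=
    Finset.sum_le_sum fun i _ ↦ log_factorial_le_of_le (le_degree i f)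
  have hr : log r ! ≤ r * log N - r + (1 + log N) := by
    have := mul_le_mul_of_nonneg_left (log_natCast_le_log_natCast hrN) r.cast_nonneg
    linarith [log_factorial_le_of_le hrN]
  have hent :
      N * ∑ i ∈ t, negMulLog (f i / N) = ∑ i ∈ t, (f i * log N - f i * log (f i)) := by
    rw [Finset.mul_sum]
    exact Finset.sum_congr rfl fun i _ ↦
      mul_negMulLog_div (Nat.cast_nonneg _) (Nat.cast_le.mpr (le_degree i f))
  rw [hent]
  simp only [Finset.sum_add_distrib, Finset.sum_sub_distrib, ← Finset.sum_mul, Finset.sum_const,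
    nsmul_eq_mul] at hfi ⊢
  linarith

end Finsupp

lemma tendsto_one_add_log_div_self_atTop :
    Tendsto (fun x : ℝ ↦ (1 + log x) / x) atTop (𝓝 0) := by
  simpa [add_div] using tendsto_inv_atTop_zero.add isLittleO_log_id_atTop.tendsto_div_nhds_zero

lemma ENNReal.ofReal_le_liminf_of_tendsto {α : Type*} {F : Filter α} [F.NeBot] {u v : α → ℝ}
    {l : ℝ} (hu : Tendsto u F (𝓝 l)) (huv : ∀ᶠ x in F, u x ≤ v x) :
    ENNReal.ofReal l ≤ liminf (fun x ↦ ENNReal.ofReal (v x)) F :=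
  ((ENNReal.continuous_ofReal.tendsto l).comp hu).liminf_eq.symm.le.trans
    (liminf_le_liminf (huv.mono fun _ h ↦ ENNReal.ofReal_le_ofReal h))

/-- Stirling lower bound for combinatorial entropy: if finitely supported integer
vectors `a n` have total mass `s n → ∞` and normalized profiles converging pointwise
to a probability distribution `p`, then `liminf h(a n)/s n ≥ H(p)`, where `h` is the
log of the multinomial coefficient and `H(p) ∈ [0,∞]` is the Shannon entropy. -/
theorem multinomial_entropy_liminf
    (a : ℕ → (ℕ →₀ ℕ)) (p : ℕ → ℝ)
    (hp_nonneg : ∀ k, 0 ≤ p k) (hp_sum : HasSum p 1)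
    (hs : Tendsto (fun n => (((a n).sum fun _ x => x : ℕ) : ℝ)) atTop atTop)
    (hfreq : ∀ k, Tendsto
      (fun n => (a n k : ℝ) / (((a n).sum fun _ x => x : ℕ) : ℝ))
      atTop (nhds (p k))) :
    (∑' k, ENNReal.ofReal (p k * Real.log (1 / p k)))
      ≤ Filter.liminf
          (fun n => ENNReal.ofReal
            (Real.log (Nat.multinomial (a n).support (a n))
              / (((a n).sum fun _ x => x : ℕ) : ℝ)))
          atTop := by
  have hterm : ∀ k, p k * log (1 / p k) = negMulLog (p k) := fun k ↦ by
    rw [one_div, log_inv, negMulLog]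
    ring
  have hdegree : ∀ n, ((a n).sum fun _ x => x) = (a n).degree := fun n ↦ rfl
  simp only [hdegree] at hs hfreq ⊢
  simp only [hterm, ENNReal.tsum_eq_iSup_nat]
  refine iSup_le fun K ↦ ?_
  rw [← ENNReal.ofReal_sum_of_nonneg fun k _ ↦
    negMulLog_nonneg (hp_nonneg k) (le_hasSum hp_sum k fun i _ ↦ hp_nonneg i)]
  refine ENNReal.ofReal_le_liminf_of_tendsto (u := fun n ↦
    ∑ k ∈ range K, negMulLog (a n k / (a n).degree) -
      (K + 1) * ((1 + log (a n).degree) / (a n).degree)) ?_ ?_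
  · simpa using
      (tendsto_finsetSum _ fun k _ ↦ (continuous_negMulLog.tendsto _).comp (hfreq k)).sub
        ((tendsto_one_add_log_div_self_atTop.comp hs).const_mul _)
  · filter_upwards [hs.eventually_gt_atTop 0] with n hN
    rw [le_div_iff₀ hN]
    have hbound := (a n).degree_mul_sum_negMulLog_le_log_multinomial_add (range K)
    rw [card_range, Nat.cast_comm] at hbound
    calc _ = (a n).degree * ∑ k ∈ range K, negMulLog (a n k / (a n).degree)
          - (K + 1) * (1 + log (a n).degree) := by field_simp
      _ ≤ _ := by linarith
end
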